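/- For every integer d ≥ 1, every d-degenerate graph G is not Ramsey for the complete (d+1)-ary tree of height d+1, T_{d+1, d+1}; that is, the edges of G can be coloured with two colours so that there is no monochromatic copy of T_{d+1, d+1}. -/

import Mathlib

open SimpleGraph

/-- The maximum degree of `G` is at most `d`: every vertex has at most `d` neighbours. -/
def MaxDegLE {α : Type*} (G : SimpleGraph α) (d : ℕ) : Prop :=
  ∀ v, (G.neighborSet v).ncard ≤ d

/-- A closed walk `c` in `G` has a chord: an edge of `G` between two vertices of `c`
that is not an edge of `c`. -/
def HasChord {α : Type*} (G : SimpleGraph α) {u : α} (c : G.Walk u u) : Prop :=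
  ∃ x y, x ∈ c.support ∧ y ∈ c.support ∧ G.Adj x y ∧ s(x, y) ∉ c.edges

/-- A graph is chordal if every cycle of length at least 4 has a chord. -/
def IsChordal {α : Type*} (G : SimpleGraph α) : Prop :=
  ∀ (u : α) (c : G.Walk u u), c.IsCycle → 4 ≤ c.length → HasChord G c

/-- `G` has treewidth at most `w`: `G` is a subgraph of a chordal graph with no
clique on `w + 2` vertices. -/
def TreewidthLE {α : Type*} (G : SimpleGraph α) (w : ℕ) : Prop :=
  ∃ G' : SimpleGraph α, G ≤ G' ∧ IsChordal G' ∧ G'.CliqueFree (w + 2)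

/-- `G` contains a copy of `H` (a subgraph isomorphic to `H`). -/
def HasCopy {α β : Type*} (G : SimpleGraph α) (H : SimpleGraph β) : Prop :=
  ∃ f : β ↪ α, ∀ u v, H.Adj u v → G.Adj (f u) (f v)

/-- Under the edge-colouring `c` of `G`, there is a copy of `H` all of whose edges
get colour `col`. -/
def HasMonoCopy {α β : Type*} (G : SimpleGraph α) (c : Sym2 α → Bool)
    (H : SimpleGraph β) (col : Bool) : Prop :=
  ∃ f : β ↪ α, ∀ u v, H.Adj u v → G.Adj (f u) (f v) ∧ c s(f u, f v) = col

/-- `G` is Ramsey for `H`: every 2-colouring of the edges of `G` contains a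
monochromatic copy of `H`. -/
def IsRamsey {α β : Type*} (G : SimpleGraph α) (H : SimpleGraph β) : Prop :=
  ∀ c : Sym2 α → Bool, ∃ col : Bool, HasMonoCopy G c H col

/-- `G` is `d`-degenerate: every nonempty (induced) subgraph has a vertex of degree
at most `d`. -/
def Degenerate {α : Type*} (d : ℕ) (G : SimpleGraph α) : Prop :=
  ∀ s : Set α, s.Nonempty → ∃ v ∈ s, (G.neighborSet v ∩ s).ncard ≤ d

/-- The strong product `G ⊠ H`. -/
def strongProd {α β : Type*} (G : SimpleGraph α) (H : SimpleGraph β) :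
    SimpleGraph (α × β) where
  Adj a b := (a.1 = b.1 ∧ H.Adj a.2 b.2) ∨ (G.Adj a.1 b.1 ∧ a.2 = b.2) ∨
    (G.Adj a.1 b.1 ∧ H.Adj a.2 b.2)
  symm := by
    constructor
    rintro a b (⟨h1, h2⟩ | ⟨h1, h2⟩ | ⟨h1, h2⟩)
    · exact Or.inl ⟨h1.symm, h2.symm⟩
    · exact Or.inr (Or.inl ⟨h1.symm, h2.symm⟩)
    · exact Or.inr (Or.inr ⟨h1.symm, h2.symm⟩)
  loopless := by
    constructor
    rintro a (⟨_, h⟩ | ⟨h, _⟩ | ⟨h, _⟩)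
    · exact H.ne_of_adj h rfl
    · exact G.ne_of_adj h rfl
    · exact G.ne_of_adj h rfl

/-- The complete `d`-ary tree of height `h`: vertices are sequences over `Fin d`
of length at most `h` (the root is the empty sequence), and each vertex `l` of
length `< h` has the `d` children `a :: l`. -/
def completeAryTree (d h : ℕ) : SimpleGraph {l : List (Fin d) // l.length ≤ h} :=
  SimpleGraph.fromRel (fun v w => ∃ a : Fin d, w.val = a :: v.val)

/-!
Order the vertices so that each has at most `d` earlier neighbours, and colour them greedily
with `d + 1` colours. Colour an edge `true` if the vertex colour increases from its earlier to
its later end. In a monochromatic copy of `T_{d+1,d+1}` every non-leaf vertex has `d + 1`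
children, so one of them comes later in the order; following such children from the root gives
`d + 2` vertices along which the vertex colour is strictly monotone, impossible with `d + 1`
colours.
-/

open Function

section DegeneracyOrder

variable {α : Type*} {G : SimpleGraph α} {d : ℕ}

def backNeighborSet (G : SimpleGraph α) (ρ : α → ℕ) (v : α) : Set α :=
  {u | G.Adj v u ∧ ρ u < ρ v}

theorem Degenerate.exists_injOn_backNeighborSet_inter_ncard_le (hG : Degenerate d G)
    (s : Finset α) :
    ∃ ρ : α → ℕ, Set.InjOn ρ s ∧ ∀ v ∈ s, (backNeighborSet G ρ v ∩ s).ncard ≤ d := by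
  classical
  induction s using Finset.strongInduction with
  | _ s ih =>
  rcases s.eq_empty_or_nonempty with rfl | hne
  · exact ⟨0, by simp, by simp⟩
  -- a vertex with at most `d` neighbours in `s` goes last, after an ordering of the rest
  obtain ⟨v, hvs, hvd⟩ := hG s (by exact_mod_cast hne)
  obtain ⟨ρ', hinj', hback'⟩ := ih (s.erase v) (Finset.erase_ssubset hvs)
  set N := (s.erase v).sup ρ' + 1
  have hlt : ∀ u ∈ s.erase v, ρ' u < N := fun u hu => Nat.lt_succ_of_le (Finset.le_sup hu)
  have hmem : ∀ u ∈ s, u ≠ v → u ∈ s.erase v := fun u hu huv => Finset.mem_erase.2 ⟨huv, hu⟩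
  refine ⟨update ρ' v N, fun u hu w hw huw => ?_, fun w hw => ?_⟩
  · simp only [Finset.mem_coe] at hu hw
    by_cases hu' : u = v <;> by_cases hw' : w = v
    · rw [hu', hw']
    · subst hu'
      rw [update_self, update_of_ne hw'] at huw
      exact absurd huw.symm (hlt w (hmem w hw hw')).ne
    · subst hw'
      rw [update_self, update_of_ne hu'] at huw
      exact absurd huw (hlt u (hmem u hu hu')).ne
    · rw [update_of_ne hu', update_of_ne hw'] at huw
      exact hinj' (hmem u hu hu') (hmem w hw hw') huw
  by_cases hw' : w = v
  · subst hw'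
    exact (Set.ncard_le_ncard (Set.inter_subset_inter_left _ fun u hu => hu.1)
      (Set.toFinite _)).trans hvd
  refine (Set.ncard_le_ncard ?_ (Set.toFinite _)).trans (hback' w (hmem w hw hw'))
  rintro u ⟨⟨hadj, hρu⟩, hus⟩
  have hu' : u ≠ v := by
    rintro rfl
    rw [update_self, update_of_ne hw'] at hρu
    exact (hlt w (hmem w hw hw')).not_gt hρu
  rw [update_of_ne hu', update_of_ne hw'] at hρu
  exact ⟨⟨hadj, hρu⟩, hmem u hus hu'⟩

theorem Degenerate.exists_injective_backNeighborSet_ncard_le [Fintype α]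
    (hG : Degenerate d G) :
    ∃ ρ : α → ℕ, Injective ρ ∧ ∀ v, (backNeighborSet G ρ v).ncard ≤ d := by
  obtain ⟨ρ, hinj, hback⟩ := hG.exists_injOn_backNeighborSet_inter_ncard_le Finset.univ
  exact ⟨ρ, by simpa using hinj, fun v => by simpa using hback v (Finset.mem_univ v)⟩

theorem exists_coloring_of_backNeighborSet_ncard_le [Finite α] {ρ : α → ℕ}
    (hρ : Injective ρ) (hback : ∀ v, (backNeighborSet G ρ v).ncard ≤ d) (n : ℕ) :
    ∃ χ : α → Fin (d + 1), ∀ u v, ρ u < n → ρ v < n → G.Adj u v → χ u ≠ χ v := by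
  classical
  induction n with
  | zero => exact ⟨0, fun u _ hu => absurd hu (Nat.not_lt_zero _)⟩
  | succ n ih =>
  obtain ⟨χ, hχ⟩ := ih
  by_cases hw : ∃ w, ρ w = n
  swap
  · push Not at hw
    have hlt : ∀ u, ρ u < n + 1 → ρ u < n := fun u hu =>
      lt_of_le_of_ne (Nat.le_of_lt_succ hu) (hw u)
    exact ⟨χ, fun u v hu hv => hχ u v (hlt u hu) (hlt v hv)⟩
  obtain ⟨w, rfl⟩ := hw
  obtain ⟨c, hc⟩ : ∃ c, c ∉ χ '' backNeighborSet G ρ w := by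
    by_contra! h
    have := (Set.ncard_image_le (f := χ) (Set.toFinite _)).trans (hback w)
    rw [Set.eq_univ_of_forall h, Set.ncard_univ, Nat.card_eq_fintype_card,
      Fintype.card_fin] at this
    omega
  have hcases : ∀ u, ρ u < ρ w + 1 → u = w ∨ ρ u < ρ w := fun u hu =>
    (Nat.lt_succ_iff_lt_or_eq.1 hu).symm.imp_left fun h => hρ h
  have hne : ∀ u, ρ u < ρ w → u ≠ w := by rintro u hu rfl; exact lt_irrefl _ hu
  have hfresh : ∀ u, G.Adj w u → ρ u < ρ w → c ≠ χ u :=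
    fun u hadj hu he => hc ⟨u, ⟨hadj, hu⟩, he.symm⟩
  refine ⟨update χ w c, fun u v hu hv hadj => ?_⟩
  rcases hcases u hu with rfl | hu <;> rcases hcases v hv with rfl | hv
  · exact absurd hadj (G.loopless.irrefl _)
  · rw [update_self, update_of_ne (hne v hv)]
    exact hfresh v hadj hv
  · rw [update_self, update_of_ne (hne u hu)]
    exact (hfresh u hadj.symm hu).symm
  · rw [update_of_ne (hne u hu), update_of_ne (hne v hv)]
    exact hχ u v hu hv hadj

theorem colorable_of_backNeighborSet_ncard_le [Finite α] {ρ : α → ℕ} (hρ : Injective ρ)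
    (hback : ∀ v, (backNeighborSet G ρ v).ncard ≤ d) : G.Colorable (d + 1) := by
  obtain ⟨N, hN⟩ : ∃ N, ∀ v, ρ v < N := by
    obtain ⟨N, hN⟩ := (Set.finite_range ρ).bddAbove
    exact ⟨N + 1, fun v => Nat.lt_succ_of_le (hN ⟨v, rfl⟩)⟩
  obtain ⟨χ, hχ⟩ := exists_coloring_of_backNeighborSet_ncard_le hρ hback N
  exact ⟨Coloring.mk χ fun h => hχ _ _ (hN _) (hN _) h⟩

theorem exists_lt_of_embedding_adj [Finite α] {ρ : α → ℕ} (hρ : Injective ρ) {x : α}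
    (hback : (backNeighborSet G ρ x).ncard ≤ d) {ι : Type*} [Fintype ι]
    (hι : d < Fintype.card ι) (g : ι ↪ α) (hg : ∀ i, G.Adj x (g i)) :
    ∃ i, ρ x < ρ (g i) := by
  by_contra! h
  have hsub : Set.range g ⊆ backNeighborSet G ρ x := by
    rintro _ ⟨i, rfl⟩
    exact ⟨hg i, (h i).lt_of_ne (hρ.ne (hg i).ne.symm)⟩
  have := Set.ncard_le_ncard hsub (Set.toFinite _)
  rw [Set.ncard_range_of_injective g.injective, Nat.card_eq_fintype_card] at this
  omega

end DegeneracyOrder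

section AscentColoring

variable {α : Type*}

def ascentColoring {β : Type*} [LinearOrder β] (ρ : α → ℕ) (χ : α → β) : Sym2 α → Bool :=
  Sym2.lift ⟨fun u v => decide ((ρ u < ρ v ∧ χ u < χ v) ∨ (ρ v < ρ u ∧ χ v < χ u)),
    fun u v => by simp only [or_comm]⟩

theorem ascentColoring_mk_of_lt {β : Type*} [LinearOrder β] {ρ : α → ℕ} (χ : α → β)
    {x y : α} (h : ρ x < ρ y) : ascentColoring ρ χ s(x, y) = decide (χ x < χ y) := by
  simp [ascentColoring, h, h.not_gt]

def ascentPotential {k : ℕ} (χ : α → Fin k) : Bool → α → Fin k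
  | true => χ
  | false => fun u => (χ u).rev

theorem ascentPotential_lt {G : SimpleGraph α} {k : ℕ} (χ : G.Coloring (Fin k)) {ρ : α → ℕ}
    {x y : α} (hxy : G.Adj x y) (h : ρ x < ρ y) {col : Bool}
    (hcol : ascentColoring ρ χ s(x, y) = col) :
    ascentPotential χ col x < ascentPotential χ col y := by
  rw [ascentColoring_mk_of_lt _ h] at hcol
  subst hcol
  by_cases hlt : χ x < χ y
  · simp [ascentPotential, hlt]
  · simpa [ascentPotential, hlt, Fin.rev_lt_rev] using
      lt_of_le_of_ne (not_lt.1 hlt) (χ.valid hxy).symm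

end AscentColoring

namespace completeAryTree

variable {k h : ℕ}

def child (v : {l : List (Fin k) // l.length ≤ h}) (hv : v.1.length < h) (a : Fin k) :
    {l : List (Fin k) // l.length ≤ h} :=
  ⟨a :: v.1, hv⟩

theorem adj_child (v : {l : List (Fin k) // l.length ≤ h}) (hv : v.1.length < h) (a : Fin k) :
    (completeAryTree k h).Adj v (child v hv a) := by
  refine (SimpleGraph.fromRel_adj _ _ _).2 ⟨fun he => ?_, Or.inl ⟨a, rfl⟩⟩
  simpa [child] using congrArg (fun w => w.1.length) he

theorem child_injective (v : {l : List (Fin k) // l.length ≤ h}) (hv : v.1.length < h) :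
    Injective (child v hv) := fun a b hab => by simpa [child] using hab

theorem exists_le_of_lt_child (ψ : {l : List (Fin k) // l.length ≤ h} → ℕ)
    (hψ : ∀ v hv, ∃ a, ψ v < ψ (child v hv a)) : ∃ v, h ≤ ψ v := by
  suffices H : ∀ i ≤ h, ∃ v : {l : List (Fin k) // l.length ≤ h}, v.1.length = i ∧ i ≤ ψ v by
    obtain ⟨v, -, hv⟩ := H h le_rfl
    exact ⟨v, hv⟩
  intro i
  induction i with
  | zero => exact fun _ => ⟨⟨[], Nat.zero_le _⟩, rfl, Nat.zero_le _⟩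
  | succ i ih =>
  intro hi
  obtain ⟨v, hlen, hv⟩ := ih (Nat.le_of_succ_le hi)
  obtain ⟨a, ha⟩ := hψ v (hlen ▸ hi)
  exact ⟨child v _ a, by simp [child, hlen], by omega⟩

end completeAryTree

theorem statement5_general (d : ℕ) (α : Type) [Fintype α] (G : SimpleGraph α)
    (hG : Degenerate d G) :
    ¬ IsRamsey G (completeAryTree (d + 1) (d + 1)) := by
  obtain ⟨ρ, hρ, hback⟩ := hG.exists_injective_backNeighborSet_ncard_le
  obtain ⟨χ⟩ := colorable_of_backNeighborSet_ncard_le hρ hback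
  intro hR
  obtain ⟨col, f, hf⟩ := hR (ascentColoring ρ χ)
  obtain ⟨v, hv⟩ := completeAryTree.exists_le_of_lt_child
    (fun v => (ascentPotential χ col (f v) : ℕ)) fun v hv => by
      have hchild a := hf _ _ (completeAryTree.adj_child v hv a)
      obtain ⟨a, ha⟩ := exists_lt_of_embedding_adj hρ (hback _) (by simp)
        (Embedding.trans ⟨_, completeAryTree.child_injective v hv⟩ f) fun a => (hchild a).1
      exact ⟨a, ascentPotential_lt χ (hchild a).1 ha (hchild a).2⟩
  exact (ascentPotential χ col (f v)).is_lt.not_ge hv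

/-- For every integer `d ≥ 1`, every `d`-degenerate graph `G` is not
Ramsey for the complete `(d+1)`-ary tree of height `d+1`. -/
theorem statement5 (d : ℕ) (hd : 1 ≤ d) (α : Type) [Fintype α] (G : SimpleGraph α)
    (hG : Degenerate d G) :
    ¬ IsRamsey G (completeAryTree (d + 1) (d + 1)) :=
  statement5_general d α G hG
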